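/- Let n ≥ 2 and let P : ℤ/2n → ℝ² be an axis-aligned 2n-gon. For 0 ≤ i ≤ n−2 and 0 ≤ j ≤ n−1 let A_i(j) = P(i + 2j) ∈ ℝ² (so each A_i is a sequence of n alternate vertices of P), and let L(i,j) ∈ ℝⁿ be a parallel lifting of the A_i, i.e.: the first two coordinates of L(i,j) are the coordinates of A_i(j), and for every j and every coordinate index t with 3 ≤ t ≤ n, the t-th coordinate of L(i,j) is independent of i. Then all the lifted centroids coincide: for all i, i' ∈ {0,…,n−2}, (1/n)·Σ_{j=0}^{n-1} L(i,j) = (1/n)·Σ_{j=0}^{n-1} L(i',j); moreover the first two coordinates of this common centroid equal the center of mass of P, namely (1/(2n))·Σ_{k ∈ ℤ/2n} P(k). -/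

import Mathlib

/-!
Along an axis-aligned polygon the first coordinate does not change across the odd edges and the
second one across the even edges. Coordinatewise, the sum over the alternate vertices
`P i, P (i + 2), …, P (i + 2n - 2)` therefore does not depend on `i`: passing from `i` to `i + 1`
either leaves every term unchanged or replaces it by the term of the next alternate vertex, which
only permutes the terms cyclically. So this sum is half the sum over all vertices. The first two
coordinates of a lifted centroid are the centroid of such a set of alternate vertices, and the
other coordinates do not depend on `i` by parallelism.
-/

/-- An axis-aligned `2n`-gon: the edge `P(i+1) - P(i)` is horizontal when `i` is even
and vertical when `i` is odd. -/
def IsAxisAligned2 (n : ℕ) (P : ZMod (2 * n) → (Fin 2 → ℝ)) : Prop :=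
  ∀ i : ZMod (2 * n),
    (Even i.val → (P (i + 1) - P i) 1 = 0) ∧
    (¬ Even i.val → (P (i + 1) - P i) 0 = 0)

open Finset

theorem sum_range_two_mul_eq_sum_even_add_sum_odd {M : Type*} [AddCommMonoid M] (f : ℕ → M)
    (n : ℕ) :
    ∑ m ∈ range (2 * n), f m = ∑ j ∈ range n, f (2 * j) + ∑ j ∈ range n, f (1 + 2 * j) := by
  induction n with
  | zero => simp
  | succ k ih =>
    rw [Nat.mul_succ, sum_range_succ, sum_range_succ, ih, sum_range_succ, sum_range_succ,
      add_comm 1 (2 * k)]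
    abel

section AlternateSums

variable {M : Type*} [AddCommGroup M] {f : ℕ → M} {n : ℕ}

theorem Function.Periodic.sum_range_add_two_mul_succ (hf : Periodic f (2 * n)) (i : ℕ) :
    ∑ j ∈ range n, f (i + 2 * (j + 1)) = ∑ j ∈ range n, f (i + 2 * j) := by
  have hwrap : f (i + 2 * n) = f (i + 2 * 0) := by simpa using hf i
  have h := (sum_range_succ' (fun j ↦ f (i + 2 * j)) n).symm.trans
    (sum_range_succ (fun j ↦ f (i + 2 * j)) n)
  rwa [hwrap, add_left_inj] at h

theorem Function.Periodic.sum_range_succ_add_two_mul {r : ℕ} (hf : Periodic f (2 * n))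
    (hstep : ∀ m, m % 2 ≠ r → f (m + 1) = f m) (i : ℕ) :
    ∑ j ∈ range n, f (i + 1 + 2 * j) = ∑ j ∈ range n, f (i + 2 * j) := by
  by_cases hi : i % 2 = r
  · rw [← hf.sum_range_add_two_mul_succ i]
    exact sum_congr rfl fun j _ ↦
      (hstep (i + 1 + 2 * j) (by omega)).symm.trans (congrArg f (by ring))
  · exact sum_congr rfl fun j _ ↦ (congrArg f (by ring)).trans (hstep _ (by omega))

theorem Function.Periodic.two_nsmul_sum_range_add_two_mul {r : ℕ}
    (hf : Periodic f (2 * n)) (hstep : ∀ m, m % 2 ≠ r → f (m + 1) = f m) (i : ℕ) :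
    2 • ∑ j ∈ range n, f (i + 2 * j) = ∑ m ∈ range (2 * n), f m := by
  have hconst : ∀ i, ∑ j ∈ range n, f (i + 2 * j) = ∑ j ∈ range n, f (2 * j) := by
    intro i
    induction i with
    | zero => simp
    | succ k ih => rw [hf.sum_range_succ_add_two_mul hstep, ih]
  rw [sum_range_two_mul_eq_sum_even_add_sum_odd, hconst, hconst 1, two_nsmul]

end AlternateSums

namespace IsAxisAligned2

variable {n : ℕ} {P : ZMod (2 * n) → Fin 2 → ℝ}

theorem apply_natCast_succ (haxis : IsAxisAligned2 n P) {m : ℕ} {c : Fin 2} (hm : m % 2 ≠ c) :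
    P ((m + 1 : ℕ) : ZMod (2 * n)) c = P m c := by
  have hpar : Even (m : ZMod (2 * n)).val ↔ m % 2 = 0 := by
    rw [ZMod.val_natCast, Nat.even_iff, Nat.mod_mod_of_dvd m (dvd_mul_right 2 n)]
  obtain ⟨hhoriz, hvert⟩ := haxis m
  rw [← sub_eq_zero, Nat.cast_succ, ← Pi.sub_apply]
  fin_cases c
  · exact hvert (by rw [hpar]; simpa using hm)
  · exact hhoriz (by rw [hpar]; exact Nat.mod_two_ne_one.mp (by simpa using hm))

theorem centroid_alternate_vertices (haxis : IsAxisAligned2 n P) (i : ℕ) :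
    (1 / (n : ℝ)) • ∑ j ∈ range n, P ((i + 2 * j : ℕ) : ZMod (2 * n)) =
      (1 / (2 * n : ℝ)) • ∑ k : Fin (2 * n), P ((k : ℕ) : ZMod (2 * n)) := by
  have hsum : 2 • ∑ j ∈ range n, P ((i + 2 * j : ℕ) : ZMod (2 * n)) =
      ∑ k : Fin (2 * n), P ((k : ℕ) : ZMod (2 * n)) := by
    rw [Fin.sum_univ_eq_sum_range (fun m ↦ P (m : ZMod (2 * n)))]
    ext c
    simp only [Pi.smul_apply, Finset.sum_apply]
    exact Function.Periodic.two_nsmul_sum_range_add_two_mul (f := fun m ↦ P (m : ZMod (2 * n)) c)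
      (fun m ↦ by simp) (fun m hm ↦ haxis.apply_natCast_succ hm) i
  rw [← hsum, ← Nat.cast_smul_eq_nsmul ℝ, smul_smul]
  rcases eq_or_ne (n : ℝ) 0 with hn | hn
  · simp [hn]
  · congr 1
    push_cast
    field_simp

end IsAxisAligned2

/-- **Lemma (centroids of a parallel lifting coincide).** Let `P` be an axis-aligned
`2n`-gon, `A_i(j) = P(i + 2j)` for `0 ≤ i ≤ n-2`, `0 ≤ j ≤ n-1`, and let `L(i,j) ∈ ℝⁿ` be a
parallel lifting of the `A_i` (same first two coordinates as `A_i(j)`, and the coordinates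
`3, …, n` of `L(i,j)` independent of `i`). Then all the lifted centroids coincide, and the
first two coordinates of the common centroid equal the center of mass of `P`. -/
theorem parallel_lifting_centroids_coincide
    (n : ℕ) (hn : 2 ≤ n)
    (P : ZMod (2 * n) → (Fin 2 → ℝ))
    (haxis : IsAxisAligned2 n P)
    (L : ℕ → ℕ → (Fin n → ℝ))
    (hlift : ∀ i ≤ n - 2, ∀ j ≤ n - 1,
      L i j ⟨0, by omega⟩ = P ((i + 2 * j : ℕ) : ZMod (2 * n)) 0 ∧
      L i j ⟨1, by omega⟩ = P ((i + 2 * j : ℕ) : ZMod (2 * n)) 1)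
    (hparallel : ∀ i ≤ n - 2, ∀ i' ≤ n - 2, ∀ j ≤ n - 1, ∀ t : Fin n,
      2 ≤ (t : ℕ) → L i j t = L i' j t) :
    (∀ i ≤ n - 2, ∀ i' ≤ n - 2,
      (1 / (n : ℝ)) • ∑ j ∈ Finset.range n, L i j =
        (1 / (n : ℝ)) • ∑ j ∈ Finset.range n, L i' j) ∧
    (∀ i ≤ n - 2,
      ((1 / (n : ℝ)) • ∑ j ∈ Finset.range n, L i j) ⟨0, by omega⟩ =
        ((1 / (2 * n : ℝ)) • ∑ k : Fin (2 * n), P ((k : ℕ) : ZMod (2 * n))) 0 ∧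
      ((1 / (n : ℝ)) • ∑ j ∈ Finset.range n, L i j) ⟨1, by omega⟩ =
        ((1 / (2 * n : ℝ)) • ∑ k : Fin (2 * n), P ((k : ℕ) : ZMod (2 * n))) 1) := by
  have hplanar : ∀ i ≤ n - 2, ∀ c : Fin 2,
      ((1 / (n : ℝ)) • ∑ j ∈ range n, L i j) ⟨c, by omega⟩ =
        ((1 / (2 * n : ℝ)) • ∑ k : Fin (2 * n), P ((k : ℕ) : ZMod (2 * n))) c := by
    intro i hi c
    rw [← haxis.centroid_alternate_vertices i]
    simp only [Pi.smul_apply, Finset.sum_apply]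
    congr 1
    refine sum_congr rfl fun j hj ↦ ?_
    have hj : j ≤ n - 1 := by have := mem_range.1 hj; omega
    fin_cases c
    exacts [(hlift i hi j hj).1, (hlift i hi j hj).2]
  refine ⟨fun i hi i' hi' ↦ funext fun t ↦ ?_, fun i hi ↦ ⟨hplanar i hi 0, hplanar i hi 1⟩⟩
  by_cases ht : 2 ≤ (t : ℕ)
  · simp only [Pi.smul_apply, Finset.sum_apply]
    congr 1
    exact sum_congr rfl fun j hj ↦ hparallel i hi i' hi' j (by have := mem_range.1 hj; omega) t ht
  · exact (hplanar i hi ⟨t, by omega⟩).trans (hplanar i' hi' ⟨t, by omega⟩).symm
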